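/- Lower bound of the betting supremum by the binary relative entropy. For every integer T ≥ 1, every z ∈ [0,1]^T and every μ ∈ [0,1], one has T·Ψ(z,μ) ≥ T·kl(μ_z, μ); moreover, if z_t ∈ {0,1} for all t ∈ [1:T], then T·Ψ(z,μ) = T·kl(μ_z, μ). -/

import Mathlib

open MeasureTheory Set

/-- Extended-real logarithm: `log ⊤ = ⊤`, `log x = -∞` for `x ≤ 0` (in particular `log 0 = -∞`). -/
noncomputable def elog (x : EReal) : EReal :=
  if x = ⊤ then ⊤ else if x ≤ 0 then ⊥ else ((Real.log x.toReal : ℝ) : EReal)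

/-- Lower endpoint `-1/(1-μ)` of the betting interval, with the convention `1/0 = +∞`. -/
noncomputable def betLower (μ : ℝ) : EReal := if μ = 1 then ⊥ else ((-(1 - μ)⁻¹ : ℝ) : EReal)

/-- Upper endpoint `1/μ` of the betting interval, with the convention `1/0 = +∞`. -/
noncomputable def betUpper (μ : ℝ) : EReal := if μ = 0 then ⊤ else ((μ⁻¹ : ℝ) : EReal)

/-- The betting interval `A_μ = [-1/(1-μ), 1/μ]` (as a set of extended reals). -/
noncomputable def betSet (μ : ℝ) : Set EReal := Set.Icc (betLower μ) (betUpper μ)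

/-- `(1/T) ∑_t log(1 + α (z_t - μ))`, with EReal conventions (`0 * ±∞ = 0`, `log 0 = -∞`). -/
noncomputable def betTerm {T : ℕ} (z : Fin T → ℝ) (μ : ℝ) (α : EReal) : EReal :=
  (((T : ℝ)⁻¹ : ℝ) : EReal) * ∑ t : Fin T, elog (1 + α * ((z t - μ : ℝ) : EReal))

/-- `Ψ(z, μ) = sup_{α ∈ A_μ} (1/T) ∑_t log(1 + α (z_t - μ))`. -/
noncomputable def Psi {T : ℕ} (z : Fin T → ℝ) (μ : ℝ) : EReal :=
  ⨆ α ∈ betSet μ, betTerm z μ α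

/-- `μ_z = (1/T) ∑_t z_t`. -/
noncomputable def muz {T : ℕ} (z : Fin T → ℝ) : ℝ := (T : ℝ)⁻¹ * ∑ t, z t

/-- The binary relative entropy `kl(p, q)`, valued in the extended reals, with
`kl(0,q) = log(1/(1-q))`, `kl(1,q) = log(1/q)`, `kl(p,0) = +∞` for `p > 0` and
`kl(p,1) = +∞` for `p < 1`. -/
noncomputable def bkl (p q : ℝ) : EReal :=
  if p = 0 then (if q = 1 then ⊤ else ((Real.log (1 / (1 - q)) : ℝ) : EReal))
  else if p = 1 then (if q = 0 then ⊤ else ((Real.log (1 / q) : ℝ) : EReal))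
  else if q = 0 ∨ q = 1 then ⊤
  else ((p * Real.log (p / q) + (1 - p) * Real.log ((1 - p) / (1 - q)) : ℝ) : EReal)

/-- The upper inverse `kl_+^{-1}(p, C) = sup {q ∈ [0,1] : kl(p,q) ≤ C}`. -/
noncomputable def klInvPlus (p : ℝ) (C : EReal) : ℝ :=
  sSup {q : ℝ | q ∈ Set.Icc (0 : ℝ) 1 ∧ bkl p q ≤ C}

/-- The lower inverse `kl_-^{-1}(p, C) = inf {q ∈ [0,1] : kl(p,q) ≤ C}`. -/
noncomputable def klInvMinus (p : ℝ) (C : EReal) : ℝ :=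
  sInf {q : ℝ | q ∈ Set.Icc (0 : ℝ) 1 ∧ bkl p q ≤ C}

/-! For `μ ∈ (0, 1)` and a real bet `α`, each factor is affine in the observation:
`1 + α (z - μ) = z x₁ + (1 - z) x₀` with `x₁ = 1 + α (1 - μ)`, `x₀ = 1 - α μ` and
`μ x₁ + (1 - μ) x₀ = 1`. Concavity of `log` bounds the log-wealth from below by the Bernoulli
log-wealth `p log x₁ + (1 - p) log x₀`, with equality for binary data, and by Gibbs' inequality
the latter is at most `kl(p, μ)`, with equality at `x₁ = p / μ`, `x₀ = (1 - p) / (1 - μ)`.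
At `μ ∈ {0, 1}` the sign of `z - μ` is constant, so the infinite bet makes `Ψ = +∞ = kl`
unless `z ≡ μ`, where both vanish. -/

lemma EReal.coe_finset_sum {ι : Type*} (s : Finset ι) (f : ι → ℝ) :
    ((∑ i ∈ s, f i : ℝ) : EReal) = ∑ i ∈ s, (f i : EReal) :=
  map_sum (⟨⟨Real.toEReal, EReal.coe_zero⟩, EReal.coe_add⟩ : ℝ →+ EReal) f s

section ExtendedLog

lemma elog_coe_of_pos {x : ℝ} (hx : 0 < x) : elog (x : EReal) = (Real.log x : EReal) := by
  rw [elog, if_neg (EReal.coe_ne_top x), if_neg (by exact_mod_cast hx.not_ge), EReal.toReal_coe]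

lemma elog_coe_of_nonpos {x : ℝ} (hx : x ≤ 0) : elog (x : EReal) = ⊥ := by
  rw [elog, if_neg (EReal.coe_ne_top x), if_pos (by exact_mod_cast hx)]

lemma elog_one : elog 1 = 0 := by
  simpa using elog_coe_of_pos one_pos

lemma elog_nonneg {x : EReal} (hx : 1 ≤ x) : 0 ≤ elog x := by
  induction x using EReal.rec with
  | bot => exact absurd (le_bot_iff.1 hx) (EReal.coe_ne_bot 1)
  | top => simp [elog]
  | coe x =>
    have hx : 1 ≤ x := mod_cast hx
    rw [elog_coe_of_pos (by linarith)]
    exact_mod_cast Real.log_nonneg hx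

lemma elog_one_add_top : elog (1 + ⊤) = ⊤ := by
  rw [EReal.add_top_of_ne_bot (x := 1) (EReal.coe_ne_bot 1)]
  exact if_pos rfl

end ExtendedLog

section Mean

variable {T : ℕ} {z : Fin T → ℝ}

lemma muz_mem_Icc (hz : ∀ t, z t ∈ Icc (0 : ℝ) 1) : muz z ∈ Icc (0 : ℝ) 1 := by
  have hsum : ∑ t, z t ≤ T := by
    simpa using Finset.sum_le_sum fun t (_ : t ∈ Finset.univ) => (hz t).2
  exact ⟨mul_nonneg (by positivity) (Finset.sum_nonneg fun t _ => (hz t).1),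
    inv_mul_le_one_of_le₀ hsum (Nat.cast_nonneg T)⟩

lemma inv_mul_sum_affine (hT : T ≠ 0) (z : Fin T → ℝ) (a b : ℝ) :
    (T : ℝ)⁻¹ * ∑ t, (z t * a + (1 - z t) * b) = muz z * a + (1 - muz z) * b := by
  simp only [muz, Finset.sum_add_distrib, ← Finset.sum_mul, Finset.sum_sub_distrib]
  field_simp
  simp only [Finset.sum_const, Finset.card_univ, Fintype.card_fin, nsmul_eq_mul, mul_one]
  ring

lemma muz_eq_zero_iff (hT : T ≠ 0) (hz : ∀ t, 0 ≤ z t) : muz z = 0 ↔ ∀ t, z t = 0 := by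
  simp [muz, hT, Finset.sum_eq_zero_iff_of_nonneg fun t _ => hz t]

lemma muz_eq_one_iff (hT : T ≠ 0) (hz : ∀ t, z t ≤ 1) : muz z = 1 ↔ ∀ t, z t = 1 := by
  have h := muz_eq_zero_iff (z := fun t => 1 - z t) hT fun t => sub_nonneg.2 (hz t)
  have hmean : muz (fun t => 1 - z t) = 1 - muz z :=
    calc muz (fun t => 1 - z t) = (T : ℝ)⁻¹ * ∑ t, (z t * 0 + (1 - z t) * 1) := by simp [muz]
      _ = 1 - muz z := by rw [inv_mul_sum_affine hT]; ring
  simp only [hmean, sub_eq_zero] at h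
  exact eq_comm.trans (h.trans (forall_congr' fun _ => eq_comm))

end Mean

section Gibbs

noncomputable def klReal (p q : ℝ) : ℝ :=
  p * Real.log (p / q) + (1 - p) * Real.log ((1 - p) / (1 - q))

lemma bkl_eq_coe_klReal (p : ℝ) {q : ℝ} (hq0 : 0 < q) (hq1 : q < 1) :
    bkl p q = (klReal p q : EReal) := by
  unfold bkl klReal
  split_ifs with h0 h1 h01 <;> simp_all [hq0.ne', hq1.ne]

lemma mul_log_sub_mul_log_div_le {p q x : ℝ} (hp : 0 ≤ p) (hq : 0 < q) (hx : 0 ≤ x)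
    (hpx : 0 < p → 0 < x) : p * Real.log x - p * Real.log (p / q) ≤ q * x - p := by
  rcases hp.eq_or_lt with rfl | hp
  · simpa using mul_nonneg hq.le hx
  have hx := hpx hp
  have h := Real.log_le_sub_one_of_pos (show 0 < x * q / p by positivity)
  rw [Real.log_div (by positivity) hp.ne', Real.log_mul hx.ne' hq.ne'] at h
  rw [Real.log_div hp.ne' hq.ne']
  have hpq : p * (x * q / p - 1) = q * x - p := by field_simp
  linarith [mul_le_mul_of_nonneg_left h hp.le]

lemma mul_log_add_mul_log_le_klReal {p q x₁ x₀ : ℝ} (hp0 : 0 ≤ p) (hp1 : p ≤ 1)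
    (hq0 : 0 < q) (hq1 : q < 1) (hx₁ : 0 ≤ x₁) (hx₀ : 0 ≤ x₀)
    (hx : q * x₁ + (1 - q) * x₀ = 1) (h₁ : 0 < p → 0 < x₁) (h₀ : p < 1 → 0 < x₀) :
    p * Real.log x₁ + (1 - p) * Real.log x₀ ≤ klReal p q := by
  have k₁ := mul_log_sub_mul_log_div_le hp0 hq0 hx₁ h₁
  have k₀ := mul_log_sub_mul_log_div_le (sub_nonneg.2 hp1) (sub_pos.2 hq1) hx₀
    fun h => h₀ (by linarith)
  rw [klReal]
  linarith

end Gibbs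

section Chord

variable {a b x : ℝ}

lemma mul_log_add_mul_log_le_log (ha : 0 ≤ a) (hb : 0 ≤ b) (hx0 : 0 ≤ x) (hx1 : x ≤ 1)
    (ha0 : a = 0 → x = 0) (hb0 : b = 0 → x = 1) :
    x * Real.log a + (1 - x) * Real.log b ≤ Real.log (x * a + (1 - x) * b) := by
  rcases hx0.eq_or_lt with rfl | hx0
  · simp
  rcases hx1.eq_or_lt with rfl | hx1
  · simp
  have ha : 0 < a := ha.lt_of_ne fun h => hx0.ne' (ha0 h.symm)
  have hb : 0 < b := hb.lt_of_ne fun h => hx1.ne (hb0 h.symm)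
  simpa [smul_eq_mul] using strictConcaveOn_log_Ioi.concaveOn.2 ha hb hx0.le
    (sub_nonneg.2 hx1.le) (add_sub_cancel x 1)

lemma mul_add_one_sub_mul_pos (ha : 0 ≤ a) (hb : 0 ≤ b) (hx0 : 0 ≤ x) (hx1 : x ≤ 1)
    (ha0 : a = 0 → x = 0) (hb0 : b = 0 → x = 1) : 0 < x * a + (1 - x) * b := by
  rcases hx0.eq_or_lt with rfl | hx0
  · simpa using hb.lt_of_ne fun h => zero_ne_one (hb0 h.symm)
  have ha : 0 < a := ha.lt_of_ne fun h => hx0.ne' (ha0 h.symm)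
  nlinarith [mul_nonneg (sub_nonneg.2 hx1) hb]

lemma log_mul_add_one_sub_mul_of_binary (hx : x = 0 ∨ x = 1) :
    Real.log (x * a + (1 - x) * b) = x * Real.log a + (1 - x) * Real.log b := by
  rcases hx with rfl | rfl <;> simp

end Chord

section Betting

variable {T : ℕ} {z : Fin T → ℝ} {μ : ℝ}

lemma le_Psi {α : EReal} (hα : α ∈ betSet μ) : betTerm z μ α ≤ Psi z μ :=
  le_iSup₂ (f := fun a (_ : a ∈ betSet μ) => betTerm z μ a) α hα

lemma Psi_eq_top {α : EReal} (hα : α ∈ betSet μ) (h : betTerm z μ α = ⊤) :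
    Psi z μ = ⊤ :=
  top_le_iff.1 (h ▸ le_Psi hα)

lemma zero_mem_betSet (hμ : μ ∈ Icc (0 : ℝ) 1) : (0 : EReal) ∈ betSet μ := by
  constructor
  · unfold betLower
    split_ifs
    · exact bot_le
    · exact_mod_cast neg_nonpos.2 (inv_nonneg.2 (sub_nonneg.2 hμ.2))
  · unfold betUpper
    split_ifs
    · exact le_top
    · exact_mod_cast inv_nonneg.2 hμ.1

lemma mem_betSet_iff (hμ0 : 0 < μ) (hμ1 : μ < 1) {α : EReal} :
    α ∈ betSet μ ↔
      ∃ r : ℝ, (r : EReal) = α ∧ 0 ≤ 1 + r * (1 - μ) ∧ 0 ≤ 1 - r * μ := by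
  have e₁ (r : ℝ) : -(1 - μ)⁻¹ ≤ r ↔ 0 ≤ 1 + r * (1 - μ) := by
    rw [← one_div, ← neg_div, div_le_iff₀ (sub_pos.2 hμ1)]
    constructor <;> intro h <;> linarith
  have e₀ (r : ℝ) : r ≤ μ⁻¹ ↔ 0 ≤ 1 - r * μ := by
    rw [← one_div, le_div_iff₀ hμ0]
    constructor <;> intro h <;> linarith
  simp only [betSet, betLower, betUpper, if_neg hμ0.ne', if_neg hμ1.ne, mem_Icc]
  constructor
  · rintro ⟨hl, hu⟩
    lift α to ℝ using ⟨ne_top_of_le_ne_top (EReal.coe_ne_top _) hu,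
      ne_bot_of_le_ne_bot (EReal.coe_ne_bot _) hl⟩
    exact ⟨α, rfl, (e₁ α).1 (mod_cast hl), (e₀ α).1 (mod_cast hu)⟩
  · rintro ⟨r, rfl, h₁, h₀⟩
    exact ⟨mod_cast (e₁ r).2 h₁, mod_cast (e₀ r).2 h₀⟩

lemma betTerm_coe_of_pos {r : ℝ} (h : ∀ t, 0 < 1 + r * (z t - μ)) :
    betTerm z μ r = ((T : ℝ)⁻¹ * ∑ t, Real.log (1 + r * (z t - μ)) : ℝ) := by
  rw [betTerm, EReal.coe_mul, EReal.coe_finset_sum]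
  congr 1
  refine Finset.sum_congr rfl fun t _ => ?_
  rw [← elog_coe_of_pos (h t), EReal.coe_add, EReal.coe_mul, EReal.coe_one]

lemma betTerm_coe_eq_bot {r : ℝ} (t₀ : Fin T) (h : 1 + r * (z t₀ - μ) ≤ 0) :
    betTerm z μ r = ⊥ := by
  have ht₀ : elog (1 + r * (z t₀ - μ : ℝ)) = ⊥ := by
    rw [← EReal.coe_one, ← EReal.coe_mul, ← EReal.coe_add, elog_coe_of_nonpos h]
  classical
  rw [betTerm, ← Finset.add_sum_erase _ _ (Finset.mem_univ t₀), ht₀, EReal.bot_add,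
    EReal.coe_mul_bot_of_pos (inv_pos.2 (Nat.cast_pos.2 t₀.pos))]

lemma betTerm_eq_top {α : EReal} (t₀ : Fin T) (hnonneg : ∀ t, 0 ≤ α * (z t - μ : ℝ))
    (ht₀ : α * (z t₀ - μ : ℝ) = ⊤) : betTerm z μ α = ⊤ := by
  have hsum : ∑ t, elog (1 + α * (z t - μ : ℝ)) = ⊤ := top_le_iff.1 <|
    calc ⊤ = elog (1 + α * (z t₀ - μ : ℝ)) := by rw [ht₀, elog_one_add_top]
      _ ≤ _ := Finset.single_le_sum (fun t _ => elog_nonneg (le_add_of_nonneg_right (hnonneg t)))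
        (Finset.mem_univ t₀)
  rw [betTerm, hsum, EReal.coe_mul_top_of_pos (inv_pos.2 (Nat.cast_pos.2 t₀.pos))]

lemma Psi_eq_zero_of_forall_eq (hμ : μ ∈ Icc (0 : ℝ) 1) (h : ∀ t, z t = μ) :
    Psi z μ = 0 := by
  have hterm (α : EReal) : betTerm z μ α = 0 := by simp [betTerm, h, elog_one]
  simp only [Psi, hterm]
  exact biSup_const ⟨0, zero_mem_betSet hμ⟩

end Betting

section Endpoints

variable {T : ℕ} {z : Fin T → ℝ}

lemma Psi_zero_eq_bkl (hT : T ≠ 0) (hz : ∀ t, z t ∈ Icc (0 : ℝ) 1) :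
    Psi z 0 = bkl (muz z) 0 := by
  by_cases hp : muz z = 0
  · have hz0 := (muz_eq_zero_iff hT fun t => (hz t).1).1 hp
    rw [Psi_eq_zero_of_forall_eq (left_mem_Icc.2 zero_le_one) hz0, hp]
    simp [bkl]
  obtain ⟨t₀, ht₀⟩ : ∃ t, z t ≠ 0 := by
    simpa [muz_eq_zero_iff hT fun t => (hz t).1] using hp
  rw [show bkl (muz z) 0 = ⊤ by simp [bkl, hp]]
  refine Psi_eq_top (α := ⊤) ⟨le_top, by simp [betUpper]⟩
    (betTerm_eq_top t₀ (fun t => ?_) ?_)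
  · exact EReal.mul_nonneg le_top (mod_cast by simpa using (hz t).1)
  · exact EReal.top_mul_coe_of_pos (by simpa using (hz t₀).1.lt_of_ne' ht₀)

lemma Psi_one_eq_bkl (hT : T ≠ 0) (hz : ∀ t, z t ∈ Icc (0 : ℝ) 1) :
    Psi z 1 = bkl (muz z) 1 := by
  by_cases hp : muz z = 1
  · have hz1 := (muz_eq_one_iff hT fun t => (hz t).2).1 hp
    rw [Psi_eq_zero_of_forall_eq (right_mem_Icc.2 zero_le_one) hz1, hp]
    simp [bkl]
  obtain ⟨t₀, ht₀⟩ : ∃ t, z t ≠ 1 := by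
    simpa [muz_eq_one_iff hT fun t => (hz t).2] using hp
  rw [show bkl (muz z) 1 = ⊤ by simp [bkl, hp]]
  refine Psi_eq_top (α := ⊥) ⟨by simp [betLower], bot_le⟩
    (betTerm_eq_top t₀ (fun t => ?_) ?_)
  · exact EReal.mul_nonneg_iff.2 (Or.inr ⟨bot_le, mod_cast by simpa using (hz t).2⟩)
  · exact EReal.bot_mul_coe_of_neg (by simpa using (hz t₀).2.lt_of_ne ht₀)

end Endpoints

section Interior

variable {T : ℕ} {z : Fin T → ℝ} {μ : ℝ}

lemma bkl_le_Psi (hT : T ≠ 0) (hz : ∀ t, z t ∈ Icc (0 : ℝ) 1) (hμ0 : 0 < μ)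
    (hμ1 : μ < 1) :
    bkl (muz z) μ ≤ Psi z μ := by
  obtain ⟨hp0, hp1⟩ := muz_mem_Icc hz
  set p := muz z
  set a := p / μ
  set b := (1 - p) / (1 - μ)
  set α := (p - μ) / (μ * (1 - μ))
  have hμ1' : 0 < 1 - μ := sub_pos.2 hμ1
  have ha : 1 + α * (1 - μ) = a := by simp only [α, a]; field_simp; ring
  have hb : 1 - α * μ = b := by simp only [α, b]; field_simp; ring
  have hfactor (t : Fin T) : 1 + α * (z t - μ) = z t * a + (1 - z t) * b := by
    rw [← ha, ← hb]; ring
  have ha0 : 0 ≤ a := by positivity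
  have hb0 : 0 ≤ b := div_nonneg (sub_nonneg.2 hp1) hμ1'.le
  have ha0' (t : Fin T) : a = 0 → z t = 0 := fun h =>
    (muz_eq_zero_iff hT fun t => (hz t).1).1 ((div_eq_zero_iff.1 h).resolve_right hμ0.ne') t
  have hb0' (t : Fin T) : b = 0 → z t = 1 := fun h =>
    (muz_eq_one_iff hT fun t => (hz t).2).1
      (sub_eq_zero.1 ((div_eq_zero_iff.1 h).resolve_right hμ1'.ne')).symm t
  have hpos (t : Fin T) : 0 < 1 + α * (z t - μ) := by
    rw [hfactor]
    exact mul_add_one_sub_mul_pos ha0 hb0 (hz t).1 (hz t).2 (ha0' t) (hb0' t)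
  have hmem : (α : EReal) ∈ betSet μ :=
    (mem_betSet_iff hμ0 hμ1).2 ⟨α, rfl, ha ▸ ha0, hb ▸ hb0⟩
  calc bkl p μ = ((T : ℝ)⁻¹ * ∑ t, (z t * Real.log a + (1 - z t) * Real.log b) : ℝ) := by
        rw [bkl_eq_coe_klReal p hμ0 hμ1, inv_mul_sum_affine hT, klReal]
    _ ≤ ((T : ℝ)⁻¹ * ∑ t, Real.log (1 + α * (z t - μ)) : ℝ) := by
        gcongr with t
        rw [hfactor]
        exact mul_log_add_mul_log_le_log ha0 hb0 (hz t).1 (hz t).2 (ha0' t) (hb0' t)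
    _ = betTerm z μ α := (betTerm_coe_of_pos hpos).symm
    _ ≤ Psi z μ := le_Psi hmem

lemma Psi_le_bkl_of_binary (hT : T ≠ 0) (hzb : ∀ t, z t = 0 ∨ z t = 1) (hμ0 : 0 < μ)
    (hμ1 : μ < 1) : Psi z μ ≤ bkl (muz z) μ := by
  have hz (t : Fin T) : z t ∈ Icc (0 : ℝ) 1 := by rcases hzb t with h | h <;> simp [h]
  obtain ⟨hp0, hp1⟩ := muz_mem_Icc hz
  refine iSup₂_le fun α hα => ?_
  obtain ⟨r, rfl, hx₁, hx₀⟩ := (mem_betSet_iff hμ0 hμ1).1 hα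
  by_cases hneg : ∃ t₀, 1 + r * (z t₀ - μ) ≤ 0
  · obtain ⟨t₀, ht₀⟩ := hneg
    simp [betTerm_coe_eq_bot t₀ ht₀]
  push Not at hneg
  set x₁ := 1 + r * (1 - μ)
  set x₀ := 1 - r * μ
  have hfactor (t : Fin T) : 1 + r * (z t - μ) = z t * x₁ + (1 - z t) * x₀ := by ring
  have h₁ : 0 < muz z → 0 < x₁ := by
    intro hp
    obtain ⟨t, ht⟩ : ∃ t, z t ≠ 0 := by
      simpa [muz_eq_zero_iff hT fun t => (hz t).1] using hp.ne'
    simpa [x₁, (hzb t).resolve_left ht] using hneg t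
  have h₀ : muz z < 1 → 0 < x₀ := by
    intro hp
    obtain ⟨t, ht⟩ : ∃ t, z t ≠ 1 := by
      simpa [muz_eq_one_iff hT fun t => (hz t).2] using hp.ne
    simpa [x₀, (hzb t).resolve_right ht] using hneg t
  rw [betTerm_coe_of_pos hneg, bkl_eq_coe_klReal _ hμ0 hμ1, EReal.coe_le_coe_iff]
  calc (T : ℝ)⁻¹ * ∑ t, Real.log (1 + r * (z t - μ))
      = (T : ℝ)⁻¹ * ∑ t, (z t * Real.log x₁ + (1 - z t) * Real.log x₀) := by
        simp only [hfactor, log_mul_add_one_sub_mul_of_binary (hzb _)]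
    _ = muz z * Real.log x₁ + (1 - muz z) * Real.log x₀ :=
        inv_mul_sum_affine hT z _ _
    _ ≤ klReal (muz z) μ :=
        mul_log_add_mul_log_le_klReal hp0 hp1 hμ0 hμ1 hx₁ hx₀ (by ring) h₁ h₀

end Interior

/-- `T · Ψ(z, μ) ≥ T · kl(μ_z, μ)`, with equality whenever `z` is a binary sequence. -/
theorem psi_ge_kl {T : ℕ} (hT : 1 ≤ T) (z : Fin T → ℝ)
    (hz : ∀ t, z t ∈ Set.Icc (0 : ℝ) 1) (μ : ℝ) (hμ : μ ∈ Set.Icc (0 : ℝ) 1) :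
    ((T : ℝ) : EReal) * bkl (muz z) μ ≤ ((T : ℝ) : EReal) * Psi z μ ∧
    ((∀ t, z t = 0 ∨ z t = 1) → ((T : ℝ) : EReal) * Psi z μ = ((T : ℝ) : EReal) * bkl (muz z) μ) := by
  have hT : T ≠ 0 := by omega
  have key : bkl (muz z) μ ≤ Psi z μ ∧
      ((∀ t, z t = 0 ∨ z t = 1) → Psi z μ = bkl (muz z) μ) := by
    rcases hμ.1.eq_or_lt with rfl | hμ0
    · exact ⟨(Psi_zero_eq_bkl hT hz).ge, fun _ => Psi_zero_eq_bkl hT hz⟩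
    rcases hμ.2.eq_or_lt with rfl | hμ1
    · exact ⟨(Psi_one_eq_bkl hT hz).ge, fun _ => Psi_one_eq_bkl hT hz⟩
    exact ⟨bkl_le_Psi hT hz hμ0 hμ1,
      fun hzb => (Psi_le_bkl_of_binary hT hzb hμ0 hμ1).antisymm (bkl_le_Psi hT hz hμ0 hμ1)⟩
  exact ⟨mul_le_mul_of_nonneg_left key.1 (EReal.coe_nonneg.2 (Nat.cast_nonneg T)),
    fun hzb => by rw [key.2 hzb]⟩
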